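/- If C and D are finitely based permutation classes, then the horizontal juxtaposition of C and D is finitely based. -/
import Mathlib


/-- A permutation of length `n`, given as a bijection of `Fin n`
(index/value `i` represents the entry `i+1` of `{1,…,n}`). -/
abbrev Perm' := Σ n : ℕ, Equiv.Perm (Fin n)

/-- `Contains σ π` means the pattern `σ` is contained in `π`. -/
def Contains (σ π : Perm') : Prop :=
  ∃ f : Fin σ.1 → Fin π.1, StrictMono f ∧
    ∀ i j : Fin σ.1, σ.2 i < σ.2 j ↔ π.2 (f i) < π.2 (f j)

/-- A permutation class: a downward-closed set of permutations. -/
def IsPermClass (X : Set Perm') : Prop :=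
  ∀ π ∈ X, ∀ σ : Perm', Contains σ π → σ ∈ X

/-- The avoidance set of a set `B` of permutations. -/
def Av (B : Set Perm') : Set Perm' := {π | ∀ β ∈ B, ¬ Contains β π}

/-- A set of permutations is finitely based if it is `Av B` for a finite `B`. -/
def FinitelyBased (X : Set Perm') : Prop := ∃ B : Set Perm', B.Finite ∧ X = Av B

/-- `PatternOn π S σ`: the entries of `π` at the set `S` of indices form a copy of `σ`. -/
def PatternOn (π : Perm') (S : Set (Fin π.1)) (σ : Perm') : Prop :=
  ∃ f : Fin σ.1 → Fin π.1, StrictMono f ∧ Set.range f = S ∧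
    ∀ i j : Fin σ.1, σ.2 i < σ.2 j ↔ π.2 (f i) < π.2 (f j)

/-- `PatternIn π S X`: the pattern of the entries of `π` at positions `S` lies in `X`. -/
def PatternIn (π : Perm') (S : Set (Fin π.1)) (X : Set Perm') : Prop :=
  ∃ σ ∈ X, PatternOn π S σ

/-- The permutation 21. -/
def perm21 : Perm' := ⟨2, Equiv.swap 0 1⟩
/-- The permutation 12. -/
def perm12 : Perm' := ⟨2, Equiv.refl (Fin 2)⟩
/-- The empty permutation. -/
def emptyPerm : Perm' := ⟨0, Equiv.refl (Fin 0)⟩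

/-- The 2×2 grid class `Grid(A,B;C,D)`: `A` top-left, `B` top-right, `C` bottom-left,
`D` bottom-right.  A position `i : Fin n` represents position `i+1`, so "position `≤ v`"
is `(i:ℕ) < v`, and "value `> h`" is `h ≤ (π.2 i : ℕ)`. -/
def GridClass (A B C D : Set Perm') : Set Perm' :=
  {π | ∃ v h : ℕ, v ≤ π.1 ∧ h ≤ π.1 ∧
    PatternIn π {i | (i : ℕ) < v ∧ h ≤ (π.2 i : ℕ)} A ∧
    PatternIn π {i | v ≤ (i : ℕ) ∧ h ≤ (π.2 i : ℕ)} B ∧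
    PatternIn π {i | (i : ℕ) < v ∧ (π.2 i : ℕ) < h} C ∧
    PatternIn π {i | v ≤ (i : ℕ) ∧ (π.2 i : ℕ) < h} D}

/-- Horizontal juxtaposition of `X` (left) and `Y` (right). -/
def HJuxt (X Y : Set Perm') : Set Perm' :=
  {π | ∃ v : ℕ, v ≤ π.1 ∧
    PatternIn π {i | (i : ℕ) < v} X ∧
    PatternIn π {i | v ≤ (i : ℕ)} Y}

/-- Vertical juxtaposition of `X` (top) and `Y` (bottom). -/
def VJuxt (X Y : Set Perm') : Set Perm' :=
  {π | ∃ h : ℕ, h ≤ π.1 ∧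
    PatternIn π {i | h ≤ (π.2 i : ℕ)} X ∧
    PatternIn π {i | (π.2 i : ℕ) < h} Y}

/-- `Squint≤(A,B;C,D)`: divisions `(v, ℓ, r)` with the left h-line `ℓ` no higher
than the right h-line `r`. -/
def SquintLE (A B C D : Set Perm') : Set Perm' :=
  {π | ∃ v l r : ℕ, v ≤ π.1 ∧ l ≤ π.1 ∧ r ≤ π.1 ∧ l ≤ r ∧
    PatternIn π {i | (i : ℕ) < v ∧ l ≤ (π.2 i : ℕ)} A ∧
    PatternIn π {i | (i : ℕ) < v ∧ (π.2 i : ℕ) < l} C ∧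
    PatternIn π {i | v ≤ (i : ℕ) ∧ r ≤ (π.2 i : ℕ)} B ∧
    PatternIn π {i | v ≤ (i : ℕ) ∧ (π.2 i : ℕ) < r} D}

/-- `Squint≥(A,B;C,D)`: divisions `(v, ℓ, r)` with the left h-line `ℓ` no lower
than the right h-line `r`. -/
def SquintGE (A B C D : Set Perm') : Set Perm' :=
  {π | ∃ v l r : ℕ, v ≤ π.1 ∧ l ≤ π.1 ∧ r ≤ π.1 ∧ r ≤ l ∧
    PatternIn π {i | (i : ℕ) < v ∧ l ≤ (π.2 i : ℕ)} A ∧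
    PatternIn π {i | (i : ℕ) < v ∧ (π.2 i : ℕ) < l} C ∧
    PatternIn π {i | v ≤ (i : ℕ) ∧ r ≤ (π.2 i : ℕ)} B ∧
    PatternIn π {i | v ≤ (i : ℕ) ∧ (π.2 i : ℕ) < r} D}

/-- The basis of a set `X`: minimal permutations not in `X`. -/
def PermBasis (X : Set Perm') : Set Perm' :=
  {π | π ∉ X ∧ ∀ σ : Perm', Contains σ π → σ ≠ π → σ ∈ X}

-- basic lemmas
lemma contains_refl (π : Perm') : Contains π π :=
  ⟨id, strictMono_id, fun _ _ => Iff.rfl⟩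

lemma contains_empty (π : Perm') : Contains emptyPerm π :=
  ⟨Fin.elim0, fun a => a.elim0, fun a => a.elim0⟩

lemma patternIn_empty {X : Set Perm'} (hX : emptyPerm ∈ X) (π : Perm') : PatternIn π ∅ X :=
  ⟨emptyPerm, hX, Fin.elim0, fun a => a.elim0, @Set.range_eq_empty _ _ (inferInstanceAs (IsEmpty (Fin 0))) _, fun a => a.elim0⟩

lemma exists_bound {B : Set Perm'} (hB : B.Finite) : ∃ N, ∀ β ∈ B, β.1 ≤ N := by
  obtain ⟨N, hN⟩ := (hB.image Sigma.fst).bddAbove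
  exact ⟨N, fun β hβ => hN (Set.mem_image_of_mem _ hβ)⟩

lemma finite_len_le (N : ℕ) : {σ : Perm' | σ.1 ≤ N}.Finite := by
  have h : {σ : Perm' | σ.1 ≤ N} ⊆
      ⋃ n ∈ Set.Iic N, Set.range (fun e : Equiv.Perm (Fin n) => (⟨n, e⟩ : Perm')) := by
    intro σ hσ
    exact Set.mem_biUnion hσ ⟨σ.2, Sigma.eta σ⟩
  exact (Set.Finite.biUnion (Set.finite_Iic N) fun n _ => Set.finite_range _).subset h

lemma patternOn_exists (π : Perm') (S : Set (Fin π.1)) :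
    ∃ σ : Perm', σ.1 = S.ncard ∧ PatternOn π S σ := by
  classical
  have hS : S.Finite := S.toFinite
  set T : Finset (Fin π.1) := hS.toFinset with hT
  have hTcard : S.ncard = T.card := by
    rw [hT]; exact Set.ncard_eq_toFinset_card S hS
  set m := T.card with hm
  let e := T.orderIsoOfFin rfl
  let g : Fin m → Fin π.1 := fun i => (e i : Fin π.1)
  have hg : StrictMono g := fun i j hij => by
    exact Subtype.coe_lt_coe.mpr (e.strictMono hij)
  have hgr : Set.range g = S := by
    ext x
    constructor
    · rintro ⟨i, rfl⟩
      have := (e i).2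
      simpa [hT] using (hS.mem_toFinset.mp this)
    · intro hx
      have hxT : x ∈ T := hS.mem_toFinset.mpr hx
      refine ⟨e.symm ⟨x, hxT⟩, ?_⟩
      simp [g]
  have hgmem : ∀ i : Fin m, π.2 (g i) ∈ T.image π.2 := fun i =>
    Finset.mem_image_of_mem _ (by simp [g])
  have hVcard : (T.image π.2).card = m := by
    rw [Finset.card_image_of_injective T (π.2).injective]
  let o := (T.image π.2).orderIsoOfFin hVcard
  let u : Fin m → Fin m := fun i => o.symm ⟨π.2 (g i), hgmem i⟩
  have huinj : Function.Injective u := by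
    intro i j hij
    have h1 : (⟨π.2 (g i), hgmem i⟩ : {x // x ∈ T.image π.2}) = ⟨π.2 (g j), hgmem j⟩ :=
      o.symm.injective hij
    have h2 : π.2 (g i) = π.2 (g j) := congrArg Subtype.val h1
    exact hg.injective ((π.2).injective h2)
  have hubij := Finite.injective_iff_bijective.mp huinj
  refine ⟨⟨m, Equiv.ofBijective u hubij⟩, by simpa using hTcard.symm, g, hg, hgr, ?_⟩
  intro i j
  show u i < u j ↔ _
  constructor
  · intro h
    have := o.symm.lt_iff_lt.mp h
    exact this
  · intro h
    exact o.symm.lt_iff_lt.mpr h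

lemma contains_of_subset {π σ ρ : Perm'} {S S' : Set (Fin π.1)}
    (hσ : PatternOn π S σ) (hρ : PatternOn π S' ρ) (hss : S ⊆ S') : Contains σ ρ := by
  obtain ⟨g, hg, hgr, hgord⟩ := hσ
  obtain ⟨f, hf, hfr, hford⟩ := hρ
  have hmem : ∀ i, ∃ j, f j = g i := fun i => by
    have h1 : g i ∈ S' := hss (hgr ▸ Set.mem_range_self i)
    rwa [← hfr] at h1
  choose φ hφ using hmem
  refine ⟨φ, ?_, ?_⟩
  · intro i j hij
    have : f (φ i) < f (φ j) := by rw [hφ i, hφ j]; exact hg hij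
    exact hf.lt_iff_lt.mp this
  · intro i j
    rw [hgord i j, ← hφ i, ← hφ j]
    exact (hford (φ i) (φ j)).symm

lemma patternOn_image {π τ ρ : Perm'} {g : Fin τ.1 → Fin π.1}
    (hg : StrictMono g) (hord : ∀ i j, τ.2 i < τ.2 j ↔ π.2 (g i) < π.2 (g j))
    {U : Set (Fin τ.1)} (h : PatternOn τ U ρ) : PatternOn π (g '' U) ρ := by
  obtain ⟨f, hf, hfr, hford⟩ := h
  exact ⟨g ∘ f, hg.comp hf, by rw [Set.range_comp, hfr],
    fun i j => (hford i j).trans (hord _ _)⟩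

lemma patternOn_preimage {π τ ρ : Perm'} {g : Fin τ.1 → Fin π.1}
    (hg : StrictMono g) (hord : ∀ i j, τ.2 i < τ.2 j ↔ π.2 (g i) < π.2 (g j))
    {U : Set (Fin τ.1)} (h : PatternOn π (g '' U) ρ) : PatternOn τ U ρ := by
  obtain ⟨f, hf, hfr, hford⟩ := h
  have hmem : ∀ i, ∃ u, u ∈ U ∧ g u = f i := fun i => by
    have h1 : f i ∈ g '' U := hfr ▸ Set.mem_range_self i
    obtain ⟨u, hu, hgu⟩ := h1
    exact ⟨u, hu, hgu⟩
  choose φ hφU hφ using hmem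
  refine ⟨φ, ?_, ?_, ?_⟩
  · intro i j hij
    have : g (φ i) < g (φ j) := by rw [hφ i, hφ j]; exact hf hij
    exact hg.lt_iff_lt.mp this
  · apply Set.eq_of_subset_of_subset
    · rintro _ ⟨i, rfl⟩; exact hφU i
    · intro u hu
      have h1 : g u ∈ g '' U := ⟨u, hu, rfl⟩
      rw [← hfr] at h1
      obtain ⟨i, hi⟩ := h1
      exact ⟨i, hg.injective (by rw [hφ i, hi])⟩
  · intro i j
    rw [hford i j, hord (φ i) (φ j), hφ i, hφ j]

lemma patternIn_mono {X : Set Perm'} (hX : IsPermClass X) {π : Perm'} {S S' : Set (Fin π.1)}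
    (hss : S ⊆ S') (h : PatternIn π S' X) : PatternIn π S X := by
  obtain ⟨ρ, hρX, hρ⟩ := h
  obtain ⟨σ, -, hσ⟩ := patternOn_exists π S
  exact ⟨σ, hX ρ hρX σ (contains_of_subset hσ hρ hss), hσ⟩

lemma hjuxt_isPermClass {C D : Set Perm'} (hC : IsPermClass C) (hD : IsPermClass D) :
    IsPermClass (HJuxt C D) := by
  classical
  rintro π ⟨v, hv, hL, hR⟩ τ ⟨g, hg, hord⟩
  -- find threshold v'' for τ
  obtain ⟨v'', hv''le, hiff⟩ : ∃ v'', v'' ≤ τ.1 ∧ ∀ i : Fin τ.1, ((i : ℕ) < v'' ↔ (g i : ℕ) < v) := by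
    by_cases hA : (Finset.univ.filter (fun i : Fin τ.1 => v ≤ (g i : ℕ))).Nonempty
    · set A := Finset.univ.filter (fun i : Fin τ.1 => v ≤ (g i : ℕ)) with hAdef
      set i₀ := A.min' hA with hi₀
      have hi₀mem : v ≤ (g i₀ : ℕ) := (Finset.mem_filter.mp (A.min'_mem hA)).2
      refine ⟨(i₀ : ℕ), i₀.isLt.le, fun i => ?_⟩
      constructor
      · intro hlt
        by_contra hge
        push_neg at hge
        have hiA : i ∈ A := Finset.mem_filter.mpr ⟨Finset.mem_univ i, hge⟩
        have h2 := A.min'_le i hiA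
        rw [← hi₀, Fin.le_def] at h2
        omega
      · intro hlt
        by_contra hge
        push_neg at hge
        have h1 : i₀ ≤ i := by rw [Fin.le_def]; omega
        have h2 := hg.monotone h1
        rw [Fin.le_def] at h2
        omega
    · refine ⟨τ.1, le_refl _, fun i => ?_⟩
      rw [Finset.not_nonempty_iff_eq_empty] at hA
      have h3 : i ∉ Finset.univ.filter (fun i : Fin τ.1 => v ≤ (g i : ℕ)) := by rw [hA]; simp
      simp only [Finset.mem_filter, Finset.mem_univ, true_and, not_le] at h3
      exact ⟨fun _ => h3, fun _ => i.isLt⟩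
  refine ⟨v'', hv''le, ?_, ?_⟩
  · have hset : {i : Fin τ.1 | (i : ℕ) < v''} = {i | (g i : ℕ) < v} := Set.ext fun i => hiff i
    rw [hset]
    have hsub : g '' {i | (g i : ℕ) < v} ⊆ {j : Fin π.1 | (j : ℕ) < v} := by
      rintro _ ⟨i, hi, rfl⟩; exact hi
    obtain ⟨ρ, hρC, hpo⟩ := patternIn_mono hC hsub hL
    exact ⟨ρ, hρC, patternOn_preimage hg hord hpo⟩
  · have hset : {i : Fin τ.1 | v'' ≤ (i : ℕ)} = {i | v ≤ (g i : ℕ)} := by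
      ext i
      have := hiff i
      simp only [Set.mem_setOf_eq]
      omega
    rw [hset]
    have hsub : g '' {i | v ≤ (g i : ℕ)} ⊆ {j : Fin π.1 | v ≤ (j : ℕ)} := by
      rintro _ ⟨i, hi, rfl⟩; exact hi
    obtain ⟨ρ, hρD, hpo⟩ := patternIn_mono hD hsub hR
    exact ⟨ρ, hρD, patternOn_preimage hg hord hpo⟩

/-- The horizontal juxtaposition of finitely based permutation
classes is finitely based. -/
theorem hjuxt_finitelyBased (C D : Set Perm')
    (hC : IsPermClass C) (hD : IsPermClass D)
    (hCfb : FinitelyBased C) (hDfb : FinitelyBased D) :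
    FinitelyBased (HJuxt C D) := by
  classical
  -- degenerate cases: C or D empty
  by_cases hCne : emptyPerm ∈ C
  case neg =>
    have hCempty : ∀ σ, σ ∉ C := fun σ hσ => hCne (hC σ hσ emptyPerm (contains_empty σ))
    refine ⟨{emptyPerm}, Set.finite_singleton _, ?_⟩
    ext π
    constructor
    · rintro ⟨v, -, ⟨σ, hσ, -⟩, -⟩
      exact absurd hσ (hCempty σ)
    · intro hπ
      exact absurd (contains_empty π) (hπ emptyPerm rfl)
  by_cases hDne : emptyPerm ∈ D
  case neg =>
    have hDempty : ∀ σ, σ ∉ D := fun σ hσ => hDne (hD σ hσ emptyPerm (contains_empty σ))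
    refine ⟨{emptyPerm}, Set.finite_singleton _, ?_⟩
    ext π
    constructor
    · rintro ⟨v, -, -, ⟨σ, hσ, -⟩⟩
      exact absurd hσ (hDempty σ)
    · intro hπ
      exact absurd (contains_empty π) (hπ emptyPerm rfl)
  -- main case
  obtain ⟨B, hBfin, hCB⟩ := hCfb
  obtain ⟨B', hB'fin, hDB'⟩ := hDfb
  obtain ⟨N₁, hN₁⟩ := exists_bound hBfin
  obtain ⟨N₂, hN₂⟩ := exists_bound hB'fin
  refine ⟨{σ | σ.1 ≤ N₁ + N₂ ∧ σ ∉ HJuxt C D}, (finite_len_le (N₁ + N₂)).subset (fun σ h => h.1), ?_⟩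
  ext π
  constructor
  · intro hπ β hβ hcon
    exact hβ.2 (hjuxt_isPermClass hC hD π hπ β hcon)
  · intro hπ
    by_contra hπJ
    set n := π.1 with hn
    set P1 : ℕ → Prop := fun v => PatternIn π {i | (i : ℕ) < v} C with hP1
    have hP0 : P1 0 := by
      have hs : {i : Fin π.1 | (i : ℕ) < 0} = ∅ := by ext i; simp
      rw [hP1]
      simp only
      rw [hs]
      exact patternIn_empty hCne π
    set v0 := Nat.findGreatest P1 n with hv0def
    have hv0 : P1 v0 := Nat.findGreatest_spec (Nat.zero_le n) hP0
    have hv0le : v0 ≤ n := Nat.findGreatest_le n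
    have hv0lt : v0 < n := by
      rcases lt_or_eq_of_le hv0le with h | h
      · exact h
      · exfalso
        apply hπJ
        refine ⟨n, le_refl _, by rw [← h]; exact hv0, ?_⟩
        have hs : {i : Fin π.1 | n ≤ (i : ℕ)} = ∅ := by
          ext i; simp only [Set.mem_setOf_eq, Set.mem_empty_iff_false, iff_false, not_le]
          exact i.isLt
        rw [hs]
        exact patternIn_empty hDne π
    have hnotv1 : ¬ P1 (v0 + 1) :=
      Nat.findGreatest_is_greatest (Nat.lt_succ_self v0) (by omega)
    -- β' copy on the right of v0
    have hRnot : ¬ PatternIn π {i | v0 ≤ (i : ℕ)} D := fun h => hπJ ⟨v0, hv0le, hv0, h⟩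
    obtain ⟨τ, hτlen, hτpo⟩ := patternOn_exists π {i | v0 ≤ (i : ℕ)}
    have hτD : τ ∉ D := fun h => hRnot ⟨τ, h, hτpo⟩
    have hτAv : ¬ (∀ β ∈ B', ¬ Contains β τ) := by rw [hDB'] at hτD; exact hτD
    push_neg at hτAv
    obtain ⟨β', hβ'B, hβ'τ⟩ := hτAv
    obtain ⟨gτ, hgτ, hgτr, hgτord⟩ := hτpo
    obtain ⟨h', hh', hh'ord⟩ := hβ'τ
    have hPpo : PatternOn π (gτ '' Set.range h') β' :=
      patternOn_image hgτ hgτord ⟨h', hh', rfl, hh'ord⟩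
    set P : Set (Fin π.1) := gτ '' Set.range h' with hPdef
    have hPsub : P ⊆ {i | v0 ≤ (i : ℕ)} := by
      rintro _ ⟨x, -, rfl⟩
      exact hgτr ▸ Set.mem_range_self x
    -- β copy on the left of v0+1
    obtain ⟨ρ, hρlen, hρpo⟩ := patternOn_exists π {i | (i : ℕ) < v0 + 1}
    have hρC : ρ ∉ C := fun h => hnotv1 ⟨ρ, h, hρpo⟩
    have hρAv : ¬ (∀ β ∈ B, ¬ Contains β ρ) := by rw [hCB] at hρC; exact hρC
    push_neg at hρAv
    obtain ⟨β, hβB, hβρ⟩ := hρAv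
    obtain ⟨gρ, hgρ, hgρr, hgρord⟩ := hρpo
    obtain ⟨h'', hh'', hh''ord⟩ := hβρ
    have hQpo : PatternOn π (gρ '' Set.range h'') β :=
      patternOn_image hgρ hgρord ⟨h'', hh'', rfl, hh''ord⟩
    set Q : Set (Fin π.1) := gρ '' Set.range h'' with hQdef
    have hQsub : Q ⊆ {i | (i : ℕ) < v0 + 1} := by
      rintro _ ⟨x, -, rfl⟩
      exact hgρr ▸ Set.mem_range_self x
    -- the witness σ
    obtain ⟨σ, hσlen, hσpo⟩ := patternOn_exists π (Q ∪ P)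
    have hrange_le : ∀ {k : ℕ} {α : Type} [Fintype α] (h : Fin k → α),
        (Set.range h).ncard ≤ k := by
      intro k α _ h
      rw [← Set.image_univ]
      calc (h '' Set.univ).ncard ≤ (Set.univ : Set (Fin k)).ncard :=
            Set.ncard_image_le Set.finite_univ
        _ = k := by rw [Set.ncard_univ]; simp
    have hlenσ : σ.1 ≤ N₁ + N₂ := by
      rw [hσlen]
      calc (Q ∪ P).ncard ≤ Q.ncard + P.ncard := Set.ncard_union_le Q P
        _ ≤ N₁ + N₂ := by
          gcongr
          · calc Q.ncard ≤ (Set.range h'').ncard := Set.ncard_image_le (Set.range h'').toFinite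
              _ ≤ β.1 := hrange_le h''
              _ ≤ N₁ := hN₁ β hβB
          · calc P.ncard ≤ (Set.range h').ncard := Set.ncard_image_le (Set.range h').toFinite
              _ ≤ β'.1 := hrange_le h'
              _ ≤ N₂ := hN₂ β' hβ'B
    obtain ⟨f, hf, hfr, hford⟩ := hσpo
    have hσJ : σ ∉ HJuxt C D := by
      rintro ⟨v', hv', hLσ, hRσ⟩
      by_cases hQc : Q ⊆ f '' {i | (i : ℕ) < v'}
      · obtain ⟨ρ₁, hρ₁C, hpo₁⟩ := hLσ
        have hpo₁' : PatternOn π (f '' {i | (i : ℕ) < v'}) ρ₁ :=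
          patternOn_image hf hford hpo₁
        have hβρ₁ : Contains β ρ₁ := contains_of_subset hQpo hpo₁' hQc
        have hβC : β ∈ C := hC ρ₁ hρ₁C β hβρ₁
        rw [hCB] at hβC
        exact hβC β hβB (contains_refl β)
      · obtain ⟨q, hqQ, hqnot⟩ := Set.not_subset.mp hQc
        obtain ⟨i_q, hiq⟩ : q ∈ Set.range f := hfr ▸ Or.inl hqQ
        have hiqv : v' ≤ (i_q : ℕ) := by
          by_contra h
          push_neg at h
          exact hqnot ⟨i_q, h, hiq⟩
        have hPc : P ⊆ f '' {i | v' ≤ (i : ℕ)} := by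
          intro p hp
          obtain ⟨i_p, hip⟩ : p ∈ Set.range f := hfr ▸ Or.inr hp
          refine ⟨i_p, ?_, hip⟩
          have hqle : (q : ℕ) ≤ (p : ℕ) := by
            have h1 : (q : ℕ) < v0 + 1 := hQsub hqQ
            have h2 : v0 ≤ (p : ℕ) := hPsub hp
            omega
          have h3 : f i_q ≤ f i_p := by
            rw [hiq, hip, Fin.le_def]; exact hqle
          have h4 : i_q ≤ i_p := hf.le_iff_le.mp h3
          rw [Fin.le_def] at h4
          show v' ≤ (i_p : ℕ)
          omega
        obtain ⟨ρ₂, hρ₂D, hpo₂⟩ := hRσ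
        have hpo₂' : PatternOn π (f '' {i | v' ≤ (i : ℕ)}) ρ₂ :=
          patternOn_image hf hford hpo₂
        have hβ'ρ₂ : Contains β' ρ₂ := contains_of_subset hPpo hpo₂' hPc
        have hβ'D : β' ∈ D := hD ρ₂ hρ₂D β' hβ'ρ₂
        rw [hDB'] at hβ'D
        exact hβ'D β' hβ'B (contains_refl β')
    exact hπ σ ⟨hlenσ, hσJ⟩ ⟨f, hf, hford⟩
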